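/- arXiv:2304.09354 — 5 statements merged into one kernel-verified Lean document; each statement's English description precedes it below -/
import Mathlib

section
/- Let M be a compact Hausdorff smooth (C^∞) manifold without boundary, modeled on a finite-dimensional real normed vector space, and let I : M → M be a smooth map satisfying I ∘ I = id and I x ≠ x for all x ∈ M. Then there exist a natural number m and a map Φ : M → EuclideanSpace ℝ (Fin m) such that: Φ is smooth; Φ is a topological embedding; the manifold derivative of Φ is injective at every point of M; and Φ (I x) = - Φ x for all x ∈ M. In other words, any fixed-point-free smooth involution of a compact manifold can be realized as the restriction of the antipodal map of a Euclidean space to an embedded copy of the manifold. -/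
/-!
Embed `M` in some `ℝⁿ` by the easy Whitney theorem, `ψ`. Then `x ↦ (ψ x, ψ (I x))` is an
embedding of `M` off the diagonal of `ℝⁿ × ℝⁿ`, intertwining `I` with the swap of coordinates.
The map `(u, v) ↦ (u - v, (u + v) ⊗ (u - v))` turns the swap into the antipodal map, and off the
diagonal it is an injective immersion: once `u - v ≠ 0` is known, the outer product
`b ⊗ (u - v)` determines `b`, hence `u + v`.
-/

open Manifold Function

namespace AntipodalEmbedding

lemma prod_eq_of_sub_eq_of_add_eq {V : Type*} [AddCommGroup V] [Module ℝ V] {p q : V × V}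
    (hdiff : p.1 - p.2 = q.1 - q.2) (hsum : p.1 + p.2 = q.1 + q.2) : p = q := by
  ext
  · linear_combination (norm := module) (2⁻¹ : ℝ) • (hsum + hdiff)
  · linear_combination (norm := module) (2⁻¹ : ℝ) • (hsum - hdiff)

variable {F : Type*} [NormedAddCommGroup F] [InnerProductSpace ℝ F]

noncomputable def outer : F →L[ℝ] F →L[ℝ] F →L[ℝ] F :=
  (ContinuousLinearMap.smulRightL ℝ F F).comp (innerSL ℝ)

@[simp]
lemma outer_apply (b a v : F) : outer b a v = inner ℝ b v • a := rfl

lemma eq_zero_of_outer_eq_zero {a b : F} (ha : a ≠ 0) (h : outer b a = 0) : b = 0 := by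
  have hb : inner ℝ b b • a = 0 := by simpa using congr($h b)
  exact inner_self_eq_zero.1 ((smul_eq_zero.1 hb).resolve_right ha)

noncomputable def oddMap (p : F × F) : F × (F →L[ℝ] F) :=
  (p.1 - p.2, outer (p.1 + p.2) (p.1 - p.2))

lemma oddMap_swap (p : F × F) : oddMap p.swap = -oddMap p := by
  simp [oddMap, add_comm]

lemma injOn_oddMap : Set.InjOn (oddMap (F := F)) {p | p.1 ≠ p.2} := by
  rintro p hp q - h
  obtain ⟨hdiff, hsum⟩ := Prod.ext_iff.1 h
  simp only [oddMap] at hdiff hsum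
  rw [← hdiff, ← sub_eq_zero, ← sub_apply, ← map_sub] at hsum
  exact prod_eq_of_sub_eq_of_add_eq hdiff
    (sub_eq_zero.1 (eq_zero_of_outer_eq_zero (sub_ne_zero.2 hp) hsum))

lemma contDiff_oddMap {n : WithTop ℕ∞} : ContDiff ℝ n (oddMap (F := F)) := by
  unfold oddMap
  fun_prop

lemma injective_fderiv_oddMap {p : F × F} (hp : p.1 ≠ p.2) :
    Injective (fderiv ℝ oddMap p) := by
  have hsub := (hasFDerivAt_fst (𝕜 := ℝ) (p := p)).sub (hasFDerivAt_snd (𝕜 := ℝ) (p := p))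
  have hadd := (hasFDerivAt_fst (𝕜 := ℝ) (p := p)).add (hasFDerivAt_snd (𝕜 := ℝ) (p := p))
  have hG : HasFDerivAt oddMap _ p := hsub.prodMk (outer.hasFDerivAt_of_bilinear hadd hsub)
  rw [hG.fderiv, injective_iff_map_eq_zero]
  intro w hw
  simp only [ContinuousLinearMap.prod_apply, Prod.mk_eq_zero, add_apply,
    ContinuousLinearMap.precompR_apply, ContinuousLinearMap.precompL_apply,
    ContinuousLinearMap.compL_apply, ContinuousLinearMap.comp_apply, sub_apply,
    ContinuousLinearMap.coe_fst', ContinuousLinearMap.coe_snd', Pi.add_apply, Pi.sub_apply] at hw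
  obtain ⟨hwdiff, hwsum⟩ := hw
  rw [hwdiff, map_zero, zero_add] at hwsum
  refine prod_eq_of_sub_eq_of_add_eq ?_ ?_
  · simpa using hwdiff
  · simpa using eq_zero_of_outer_eq_zero (sub_ne_zero.2 hp) hwsum

section Immersion

variable {E H M F F' : Type*} [NormedAddCommGroup E] [NormedSpace ℝ E] [TopologicalSpace H]
  {I : ModelWithCorners ℝ E H} [TopologicalSpace M] [ChartedSpace H M]
  [NormedAddCommGroup F] [NormedSpace ℝ F] [NormedAddCommGroup F'] [NormedSpace ℝ F'] {x : M}

lemma injective_mfderiv_prodMk_space {f : M → F} {g : M → F'}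
    (hf : MDifferentiableAt I 𝓘(ℝ, F) f x) (hg : MDifferentiableAt I 𝓘(ℝ, F') g x)
    (hf' : Injective (mfderiv I 𝓘(ℝ, F) f x)) :
    Injective (mfderiv I 𝓘(ℝ, F × F') (fun y ↦ (f y, g y)) x) := by
  have hfst : mfderiv I 𝓘(ℝ, F) f x = (ContinuousLinearMap.fst ℝ F F').comp
      (mfderiv I 𝓘(ℝ, F × F') (fun y ↦ (f y, g y)) x) :=
    ((ContinuousLinearMap.fst ℝ F F').hasMFDerivAt.comp x
      (hf.prodMk_space hg).hasMFDerivAt).mfderiv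
  rw [hfst] at hf'
  exact Injective.of_comp (f := ContinuousLinearMap.fst ℝ F F') hf'

lemma injective_mfderiv_comp {g : F → F'} {g' : F →L[ℝ] F'} {f : M → F}
    (hg : HasFDerivAt g g' (f x)) (hf : MDifferentiableAt I 𝓘(ℝ, F) f x)
    (hg' : Injective g') (hf' : Injective (mfderiv I 𝓘(ℝ, F) f x)) :
    Injective (mfderiv I 𝓘(ℝ, F') (g ∘ f) x) := by
  rw [(hg.hasMFDerivAt.comp x hf.hasMFDerivAt).mfderiv]
  exact hg'.comp hf'

end Immersion

end AntipodalEmbedding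

open AntipodalEmbedding

/-- Any fixed-point-free smooth involution of a compact manifold can be realized as
the restriction of the antipodal map of a Euclidean space: there is a smooth embedding
`Φ` of `M` into some Euclidean space, which is moreover an immersion, such that
`Φ ∘ I = -Φ`. -/
theorem stmt_0 {E : Type*} [NormedAddCommGroup E] [NormedSpace ℝ E]
    [FiniteDimensional ℝ E]
    {M : Type*} [TopologicalSpace M] [ChartedSpace E M]
    [IsManifold 𝓘(ℝ, E) (⊤ : ℕ∞) M] [CompactSpace M] [T2Space M]
    (I : M → M) (hI : ContMDiff 𝓘(ℝ, E) 𝓘(ℝ, E) (⊤ : ℕ∞) I)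
    (hinv : I ∘ I = id) (hfix : ∀ x, I x ≠ x) :
    ∃ (m : ℕ) (Φ : M → EuclideanSpace ℝ (Fin m)),
      ContMDiff 𝓘(ℝ, E) 𝓘(ℝ, EuclideanSpace ℝ (Fin m)) (⊤ : ℕ∞) Φ ∧
      Topology.IsEmbedding Φ ∧
      (∀ x : M, Function.Injective
        (mfderiv 𝓘(ℝ, E) 𝓘(ℝ, EuclideanSpace ℝ (Fin m)) Φ x)) ∧
      ∀ x : M, Φ (I x) = - Φ x := by
  obtain ⟨n, ψ, hψ, hψemb, hψ'⟩ := exists_embedding_euclidean_of_compact (I := 𝓘(ℝ, E)) (M := M)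
  let F := EuclideanSpace ℝ (Fin n)
  let L := toEuclidean (E := F × (F →L[ℝ] F))
  let pair : M → F × F := fun x ↦ (ψ x, ψ (I x))
  have hpair : ContMDiff 𝓘(ℝ, E) 𝓘(ℝ, F × F) (⊤ : ℕ∞) pair := hψ.prodMk_space (hψ.comp hI)
  have hoff (x : M) : (pair x).1 ≠ (pair x).2 := fun h ↦ hfix x (hψemb.injective h).symm
  have hΦ : ContMDiff 𝓘(ℝ, E) 𝓘(ℝ, EuclideanSpace ℝ (Fin _)) (⊤ : ℕ∞) ((L ∘ oddMap) ∘ pair) :=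
    (L.contDiff.comp contDiff_oddMap).comp_contMDiff hpair
  refine ⟨_, (L ∘ oddMap) ∘ pair, hΦ, ?_, fun x ↦ ?_, fun x ↦ ?_⟩
  · refine (hΦ.continuous.isClosedEmbedding fun x y h ↦ ?_).isEmbedding
    exact hψemb.injective (congrArg Prod.fst (injOn_oddMap (hoff x) (hoff y) (L.injective h)))
  · exact injective_mfderiv_comp (g := L ∘ oddMap)
      (L.hasFDerivAt.comp _ ((contDiff_oddMap (n := 1)).differentiable one_ne_zero _).hasFDerivAt)
      (hpair.mdifferentiableAt (by simp)) (L.injective.comp (injective_fderiv_oddMap (hoff x)))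
      (injective_mfderiv_prodMk_space (hψ.mdifferentiableAt (by simp))
        ((hψ.comp hI).mdifferentiableAt (by simp)) (hψ' x))
  · have hpair_swap : pair (I x) = (pair x).swap := by
      simp [pair, show I (I x) = x from congrFun hinv x]
    simp only [comp_apply, hpair_swap, oddMap_swap, L.map_neg]
end

section
/- Let W be a vector space over ℝ, X any type, I : X → X a fixed-point-free involution (I ∘ I = id and I x ≠ x for all x), and Φ₁ : X → W an injective map. Define Φ : X → W × (W ⊗[ℝ] W) by Φ x = (Φ₁ x - Φ₁ (I x), (Φ₁ x - Φ₁ (I x)) ⊗ₜ (Φ₁ x + Φ₁ (I x))). Then Φ is injective, and Φ (I x) = - Φ x for every x ∈ X (negation taken componentwise in the product W × (W ⊗[ℝ] W)). -/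
open TensorProduct

/-- Given a fixed-point-free involution `I` of `X` and an injective map `Φ₁ : X → W`,
the map `Φ x = (Φ₁ x - Φ₁ (I x), (Φ₁ x - Φ₁ (I x)) ⊗ₜ (Φ₁ x + Φ₁ (I x)))` is injective
and intertwines `I` with the antipodal map. -/
theorem stmt_1 {W : Type*} [AddCommGroup W] [Module ℝ W] {X : Type*}
    (I : X → X) (hI : I ∘ I = id) (hfix : ∀ x, I x ≠ x)
    (Φ₁ : X → W) (hΦ₁ : Function.Injective Φ₁)
    (Φ : X → W × (W ⊗[ℝ] W))
    (hΦ : ∀ x, Φ x = (Φ₁ x - Φ₁ (I x), (Φ₁ x - Φ₁ (I x)) ⊗ₜ[ℝ] (Φ₁ x + Φ₁ (I x)))) :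
    Function.Injective Φ ∧ ∀ x, Φ (I x) = - Φ x := by
  have hII : ∀ x, I (I x) = x := fun x => congrFun hI x
  constructor
  · intro x y hxy
    rw [hΦ x, hΦ y, Prod.mk.injEq] at hxy
    obtain ⟨h1, h2⟩ := hxy
    set a := Φ₁ x - Φ₁ (I x) with ha
    have hane : a ≠ 0 := by
      intro h
      exact hfix x (hΦ₁ (by rwa [ha, sub_eq_zero] at h)).symm
    -- get a dual functional f with f a ≠ 0
    obtain ⟨f, hf⟩ : ∃ f : Module.Dual ℝ W, f a ≠ 0 := by
      by_contra h
      push_neg at h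
      exact hane ((Module.forall_dual_apply_eq_zero_iff ℝ a).mp h)
    -- the map u ⊗ v ↦ f u • v
    let g : W ⊗[ℝ] W →ₗ[ℝ] W := TensorProduct.lift ((LinearMap.lsmul ℝ W).comp f)
    have hg : ∀ u v : W, g (u ⊗ₜ[ℝ] v) = f u • v := fun u v => rfl
    have h3 : f a • (Φ₁ x + Φ₁ (I x)) = f a • (Φ₁ y + Φ₁ (I y)) := by
      have := congrArg g h2
      rw [hg, ← h1, hg] at this
      exact this
    have hsum : Φ₁ x + Φ₁ (I x) = Φ₁ y + Φ₁ (I y) := smul_right_injective W hf h3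
    have h2x : (2 : ℝ) • Φ₁ x = (2 : ℝ) • Φ₁ y := by
      have hd : Φ₁ x - Φ₁ (I x) = Φ₁ y - Φ₁ (I y) := h1
      rw [two_smul, two_smul]
      linear_combination (norm := abel) hd + hsum
    exact hΦ₁ (smul_right_injective W (two_ne_zero) h2x)
  · intro x
    rw [hΦ (I x), hΦ x, hII x, Prod.neg_mk, Prod.mk.injEq]
    constructor
    · abel
    · rw [show Φ₁ (I x) - Φ₁ x = -(Φ₁ x - Φ₁ (I x)) by abel,
        show Φ₁ (I x) + Φ₁ x = Φ₁ x + Φ₁ (I x) by abel, neg_tmul]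
end

section
/- Let W be a vector space over ℝ and let x, y ∈ W with x ≠ y. Then the linear map D : W × W → W × (W ⊗[ℝ] W) defined by D(a, b) = (a - b, (a - b) ⊗ₜ (x + y) + (x - y) ⊗ₜ (a + b)) is injective; that is, if a - b = 0 and (a - b) ⊗ₜ (x + y) + (x - y) ⊗ₜ (a + b) = 0, then a = 0 and b = 0. -/
open TensorProduct

/-- For `x ≠ y` in `W`, the differential of `Ψ(x, y) = (x - y, (x - y) ⊗ₜ (x + y))`
at `(x, y)`, namely `D(a, b) = (a - b, (a - b) ⊗ₜ (x + y) + (x - y) ⊗ₜ (a + b))`,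
is injective. -/
theorem stmt_3 {W : Type*} [AddCommGroup W] [Module ℝ W] (x y : W) (hxy : x ≠ y) :
    ∀ a b : W, a - b = 0 →
      (a - b) ⊗ₜ[ℝ] (x + y) + (x - y) ⊗ₜ[ℝ] (a + b) = 0 →
      a = 0 ∧ b = 0 := by
  intro a b hab h
  have hab' : a = b := sub_eq_zero.mp hab
  rw [hab, zero_tmul, zero_add] at h
  have hxy' : x - y ≠ 0 := sub_ne_zero.mpr hxy
  obtain ⟨f, hf⟩ : ∃ f : Module.Dual ℝ W, f (x - y) ≠ 0 := by
    by_contra hc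
    push_neg at hc
    exact hxy' ((Module.forall_dual_apply_eq_zero_iff ℝ (x - y)).mp hc)
  have := congrArg (TensorProduct.lift ((LinearMap.lsmul ℝ W).comp f)) h
  simp only [TensorProduct.lift.tmul, map_zero, LinearMap.comp_apply,
    LinearMap.lsmul_apply] at this
  have hsum : a + b = 0 := by
    have := smul_eq_zero.mp this
    tauto
  have ha : a = 0 := by
    have : a + a = 0 := by rw [hab'] at *; exact hsum
    have h2 : (2 : ℝ) • a = 0 := by rw [two_smul]; exact this
    simpa using smul_eq_zero.mp h2
  exact ⟨ha, hab' ▸ ha⟩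
end

section
/- Let E be a type and σ : E → E an involution (σ ∘ σ = id). Let λ : E → ℤ satisfy λ (σ e) = λ e for all e ∈ E. Then there exists η : E → ℤ with λ e = η e + η (σ e) for all e if and only if λ e is even for every fixed point e of σ (i.e., for every e with σ e = e). -/
/-- For an involution `σ` of a set `E` and a `σ`-invariant function `l : E → ℤ`,
`l` can be written as `η + η ∘ σ` iff `l` is even at every fixed point of `σ`. -/
theorem stmt_4 {E : Type*} (σ : E → E) (hσ : σ ∘ σ = id)
    (l : E → ℤ) (hl : ∀ e, l (σ e) = l e) :
    (∃ η : E → ℤ, ∀ e, l e = η e + η (σ e)) ↔ ∀ e, σ e = e → Even (l e) := by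
  classical
  have hσ' : ∀ e, σ (σ e) = e := fun e => congrFun hσ e
  constructor
  · rintro ⟨η, hη⟩ e he
    refine ⟨η e, ?_⟩
    rw [hη e, he]
  · intro h
    have srefl : ∀ a : E, a = a ∨ a = σ a := fun a => Or.inl rfl
    have ssymm : ∀ {a b : E}, (b = a ∨ b = σ a) → (a = b ∨ a = σ b) := by
      rintro a b (rfl | rfl)
      · exact Or.inl rfl
      · exact Or.inr (hσ' a).symm
    have strans : ∀ {a b c : E}, (b = a ∨ b = σ a) → (c = b ∨ c = σ b) →
        (c = a ∨ c = σ a) := by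
      rintro a b c (rfl | rfl) (rfl | rfl)
      · exact Or.inl rfl
      · exact Or.inr rfl
      · exact Or.inr rfl
      · exact Or.inl (hσ' a)
    let s : Setoid E := ⟨fun a b => b = a ∨ b = σ a,
      ⟨srefl, fun hab => ssymm hab, fun hab hbc => strans hab hbc⟩⟩
    refine ⟨fun e => if σ e = e then l e / 2
      else if (Quotient.mk s e).out = e then l e else 0, fun e => ?_⟩
    by_cases hfix : σ e = e
    · obtain ⟨r, hr⟩ := h e hfix
      simp only [hfix, ite_true, if_true]
      rw [hr]; omega
    · have hfix' : σ (σ e) ≠ σ e := by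
        rw [hσ' e]; exact fun hc => hfix hc.symm
      have hmk : Quotient.mk s (σ e) = Quotient.mk s e :=
        Quotient.sound (Or.inr (hσ' e).symm)
      have hout : (Quotient.mk s e).out = e ∨ (Quotient.mk s e).out = σ e := by
        have hmo : e = (Quotient.mk s e).out ∨ e = σ (Quotient.mk s e).out :=
          @Quotient.mk_out E s e
        rcases hmo with h1 | h1
        · exact Or.inl h1.symm
        · exact Or.inr ((hσ' _).symm.trans (congrArg σ h1.symm))
      rcases hout with hr | hr
      · have hr' : (Quotient.mk s (σ e)).out ≠ σ e := by
          rw [hmk, hr]; exact fun hc => hfix hc.symm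
        simp only [if_neg hfix, if_neg hfix', if_pos hr, if_neg hr']
        ring
      · have hr1 : (Quotient.mk s e).out ≠ e := by
          rw [hr]; exact hfix
        have hr2 : (Quotient.mk s (σ e)).out = σ e := by rw [hmk, hr]
        simp only [if_neg hfix, if_neg hfix', if_neg hr1, if_pos hr2, hl e]
        ring
end

section
/- Let M be a smooth (C^∞) manifold without boundary modeled on a finite-dimensional real normed vector space, let I : M → M be a smooth involution (I ∘ I = id) with no fixed points (I x ≠ x for all x), and let F : M → ℝ be a smooth function satisfying F (I x) = - F x for all x ∈ M. Assume that F takes distinct values at distinct critical points: for all p ≠ q with mfderiv F p = 0 and mfderiv F q = 0 one has F p ≠ F q. Then 0 is not a critical value of F; that is, there is no point p ∈ M with mfderiv F p = 0 and F p = 0. -/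
open Manifold

section

variable {𝕜 : Type*} [NontriviallyNormedField 𝕜]
  {E : Type*} [NormedAddCommGroup E] [NormedSpace 𝕜 E]
  {H : Type*} [TopologicalSpace H] {I : ModelWithCorners 𝕜 E H}
  {M : Type*} [TopologicalSpace M] [ChartedSpace H M]
  {E' : Type*} [NormedAddCommGroup E'] [NormedSpace 𝕜 E']

theorem mfderiv_apply_involution_eq_zero {σ : M → M} {F : M → E'} {x : M}
    (hσ : Function.Involutive σ) (hodd : ∀ y, F (σ y) = -F y)
    (hF : MDifferentiableAt I 𝓘(𝕜, E') F x) (hσx : MDifferentiableAt I I σ (σ x))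
    (hx : mfderiv I 𝓘(𝕜, E') F x = 0) :
    mfderiv I 𝓘(𝕜, E') F (σ x) = 0 := by
  have hF_eq : F = -(F ∘ σ) := funext fun y => by
    simp only [Pi.neg_apply, Function.comp_apply, hodd, neg_neg]
  rw [← hσ x] at hF hx
  rw [hF_eq, mfderiv_neg, mfderiv_comp (σ x) hF hσx, hx, ContinuousLinearMap.zero_comp, neg_zero]
  -- the two zeros live in tangent spaces at different points, equal only up to unfolding
  rfl

end

theorem stmt_10_general {E : Type*} [NormedAddCommGroup E] [NormedSpace ℝ E]
    {M : Type*} [TopologicalSpace M] [ChartedSpace E M]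
    (I : M → M) (hI : ContMDiff 𝓘(ℝ, E) 𝓘(ℝ, E) (⊤ : ℕ∞) I)
    (hinv : I ∘ I = id) (hfix : ∀ x, I x ≠ x)
    (F : M → ℝ) (hF : ContMDiff 𝓘(ℝ, E) 𝓘(ℝ, ℝ) (⊤ : ℕ∞) F)
    (hodd : ∀ x, F (I x) = - F x)
    (hsimple : ∀ p q : M, p ≠ q →
      mfderiv 𝓘(ℝ, E) 𝓘(ℝ, ℝ) F p = 0 → mfderiv 𝓘(ℝ, E) 𝓘(ℝ, ℝ) F q = 0 →
      F p ≠ F q) :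
    ¬ ∃ p : M, mfderiv 𝓘(ℝ, E) 𝓘(ℝ, ℝ) F p = 0 ∧ F p = 0 := by
  rintro ⟨p, hp, hFp⟩
  have hIp : mfderiv 𝓘(ℝ, E) 𝓘(ℝ, ℝ) F (I p) = 0 :=
    mfderiv_apply_involution_eq_zero (congrFun hinv) hodd
      (hF.mdifferentiableAt (by simp)) (hI.mdifferentiableAt (by simp)) hp
  exact hsimple (I p) p (hfix p) hIp hp (by rw [hodd, hFp, neg_zero])

/-- If `F` is a smooth function, odd with respect to a fixed-point-free smooth
involution `I`, taking distinct values at distinct critical points, then `0` is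
not a critical value of `F`. -/
theorem stmt_10 {E : Type*} [NormedAddCommGroup E] [NormedSpace ℝ E]
    [FiniteDimensional ℝ E]
    {M : Type*} [TopologicalSpace M] [ChartedSpace E M]
    [IsManifold 𝓘(ℝ, E) (⊤ : ℕ∞) M]
    (I : M → M) (hI : ContMDiff 𝓘(ℝ, E) 𝓘(ℝ, E) (⊤ : ℕ∞) I)
    (hinv : I ∘ I = id) (hfix : ∀ x, I x ≠ x)
    (F : M → ℝ) (hF : ContMDiff 𝓘(ℝ, E) 𝓘(ℝ, ℝ) (⊤ : ℕ∞) F)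
    (hodd : ∀ x, F (I x) = - F x)
    (hsimple : ∀ p q : M, p ≠ q →
      mfderiv 𝓘(ℝ, E) 𝓘(ℝ, ℝ) F p = 0 → mfderiv 𝓘(ℝ, E) 𝓘(ℝ, ℝ) F q = 0 →
      F p ≠ F q) :
    ¬ ∃ p : M, mfderiv 𝓘(ℝ, E) 𝓘(ℝ, ℝ) F p = 0 ∧ F p = 0 :=
  stmt_10_general I hI hinv hfix F hF hodd hsimple
end
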